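/- arXiv:1407.6956 — 2 statements merged into one kernel-verified Lean document; each statement's English description precedes it below -/
import Mathlib

section
/- For every complex number z with Im z > 0, the explicit 4×4 matrix M₄⁻¹(z, z̄) of the S³ model with z̄ = conj(z) — having rows (4i(z²+4 z z̄+z̄²)/Δ, 4i√3(z+z̄)/Δ, i(z³+11 z̄ z²+11 z̄² z+z̄³)/Δ, -2i√3 z z̄ (z+z̄)²/Δ), (4i√3(z+z̄)/Δ, 8i/Δ, 2i√3(z+z̄)²/Δ, -i(z+z̄)³/Δ), (i(z³+11 z̄ z²+11 z̄² z+z̄³)/Δ, 2i√3(z+z̄)²/Δ, 4i z z̄(z²+4 z z̄+z̄²)/Δ, -4i√3 z² z̄²(z+z̄)/Δ), (-2i√3 z z̄(z+z̄)²/Δ, -i(z+z̄)³/Δ, -4i√3 z² z̄²(z+z̄)/Δ, 8i z³ z̄³/Δ), where Δ := (z - z̄)³ — has real entries, is symmetric, and is negative definite as a real quadratic form on ℝ⁴. In particular at z = i it equals -1₄. -/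
/-!
Writing `z = x + iy`, one has `z - z̄ = 2iy`, so every entry of `M₄⁻¹` is real and
`M₄⁻¹ = -y⁻³ LᵀL` for an explicit real matrix `L = M4invFactor x y`, which becomes triangular
after permuting its columns, with diagonal `y³, y², y, 1`. For `y > 0` the Gram matrix `LᵀL` is
therefore positive definite, and `M₄⁻¹` negative definite. At `z = i`, `L` is a permutation
matrix, so `M₄⁻¹ = -1`.
-/

noncomputable section

open Matrix

/-- The matrix `M₄⁻¹` of the `S³` special Kähler model. -/
def M4inv (z : ℂ) : Matrix (Fin 4) (Fin 4) ℂ :=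
  let zb := starRingEnd ℂ z
  let Δ := (z - zb) ^ 3
  let s3 : ℂ := (Real.sqrt 3 : ℝ)
  let I := Complex.I
  !![4*I*(z^2 + 4*z*zb + zb^2)/Δ, 4*I*s3*(z + zb)/Δ,
       I*(z^3 + 11*zb*z^2 + 11*zb^2*z + zb^3)/Δ, -2*I*s3*z*zb*(z + zb)^2/Δ;
     4*I*s3*(z + zb)/Δ, 8*I/Δ, 2*I*s3*(z + zb)^2/Δ, -I*(z + zb)^3/Δ;
     I*(z^3 + 11*zb*z^2 + 11*zb^2*z + zb^3)/Δ, 2*I*s3*(z + zb)^2/Δ,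
       4*I*z*zb*(z^2 + 4*z*zb + zb^2)/Δ, -4*I*s3*z^2*zb^2*(z + zb)/Δ;
     -2*I*s3*z*zb*(z + zb)^2/Δ, -I*(z + zb)^3/Δ,
       -4*I*s3*z^2*zb^2*(z + zb)/Δ, 8*I*z^3*zb^3/Δ]

/-- Its rows are the linear forms in the sum of squares
`-y³ vᵀ M₄⁻¹ v = (y³d)² + (y²(c - √3xd))² + (y(a + 2xc - √3x²d))² + (√3xa + b + √3x²c - x³d)²`
for `v = (a, b, c, d)`. -/
def M4invFactor (x y : ℝ) : Matrix (Fin 4) (Fin 4) ℝ :=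
  !![0, 0, 0, y ^ 3;
     0, 0, y ^ 2, -√3 * x * y ^ 2;
     y, 0, 2 * x * y, -√3 * x ^ 2 * y;
     √3 * x, 1, √3 * x ^ 2, -x ^ 3]

theorem det_M4invFactor (x y : ℝ) : (M4invFactor x y).det = -y ^ 6 := by
  rw [det_succ_row_zero, Fin.sum_univ_four]
  simp [M4invFactor, det_fin_three, Fin.succAbove]
  ring

theorem M4invFactor_mulVec_injective {x y : ℝ} (hy : y ≠ 0) :
    Function.Injective (M4invFactor x y).mulVec := by
  rw [mulVec_injective_iff_isUnit, isUnit_iff_isUnit_det, det_M4invFactor]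
  simpa using hy

theorem posDef_transpose_mul_M4invFactor {x y : ℝ} (hy : y ≠ 0) :
    ((M4invFactor x y)ᵀ * M4invFactor x y).PosDef :=
  PosDef.conjTranspose_mul_self _ (M4invFactor_mulVec_injective hy)

theorem M4inv_eq_map_ofReal {z : ℂ} (hz : z.im ≠ 0) :
    M4inv z = ((-(z.im ^ 3)⁻¹) •
      ((M4invFactor z.re z.im)ᵀ * M4invFactor z.re z.im)).map ((↑) : ℝ → ℂ) := by
  obtain ⟨x, y⟩ := z
  simp only at hz ⊢
  have hzb : starRingEnd ℂ ⟨x, y⟩ = x - y * Complex.I := by apply Complex.ext <;> simp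
  have hz' : (⟨x, y⟩ : ℂ) = x + y * Complex.I := by apply Complex.ext <;> simp
  have hy : (y : ℂ) ≠ 0 := by exact_mod_cast hz
  have hI6 : Complex.I ^ 6 = -1 := by
    rw [show 6 = 2 * 3 by rfl, pow_mul, Complex.I_sq]; norm_num
  have hs : ((√3 : ℝ) : ℂ) ^ 2 = 3 := by norm_cast; simp
  ext i j
  fin_cases i <;> fin_cases j <;>
  · simp only [M4inv, hzb]
    rw [hz']
    -- collapsing `z - z̄` to `2iy` before clearing denominators lets the factors of `I` cancel
    simp only [map_apply, Matrix.smul_apply, smul_eq_mul, mul_apply, transpose_apply,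
      Fin.sum_univ_four, M4invFactor, of_apply, cons_val', cons_val_zero, cons_val_one, cons_val,
      cons_val_fin_one, Fin.isValue, add_sub_sub_cancel, add_add_sub_cancel]
    push_cast
    field_simp
    ring_nf
    simp only [Complex.I_sq, hs, Complex.I_pow_four, hI6]
    ring

theorem M4inv_I : M4inv Complex.I = -1 := by
  rw [M4inv_eq_map_ofReal (by simp)]
  ext i j
  fin_cases i <;> fin_cases j <;> simp [M4invFactor, mul_apply, Fin.sum_univ_four]

theorem Matrix.sum_sum_mul_mul_eq_dotProduct_mulVec {n R : Type*} [Fintype n] [CommSemiring R]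
    (A : Matrix n n R) (x : n → R) :
    ∑ i, ∑ j, x i * A i j * x j = x ⬝ᵥ A *ᵥ x := by
  simp [dotProduct, mulVec, Finset.mul_sum, mul_assoc, mul_left_comm]

theorem Matrix.PosDef.dotProduct_neg_smul_mulVec_neg {n : Type*} [Fintype n]
    {P : Matrix n n ℝ} (hP : P.PosDef) {c : ℝ} (hc : 0 < c) {x : n → ℝ} (hx : x ≠ 0) :
    x ⬝ᵥ ((-c) • P) *ᵥ x < 0 := by
  rw [smul_mulVec, dotProduct_smul, smul_eq_mul, neg_mul, neg_lt_zero]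
  exact mul_pos hc (hP.dotProduct_mulVec_pos hx)

/-- for `Im z > 0` the matrix `M₄⁻¹(z,z̄)` has real entries, is
symmetric, and is negative definite as a real quadratic form on `ℝ⁴`; in
particular at `z = i` it equals `-1₄`. -/
theorem stmt_5 :
    (∀ z : ℂ, 0 < z.im →
      (∀ i j, (M4inv z i j).im = 0) ∧
      (M4inv z)ᵀ = M4inv z ∧
      (∀ x : Fin 4 → ℝ, x ≠ 0 → ∑ i, ∑ j, x i * (M4inv z i j).re * x j < 0)) ∧
    M4inv Complex.I = -1 := by
  refine ⟨fun z hz => ?_, M4inv_I⟩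
  rw [M4inv_eq_map_ofReal hz.ne']
  refine ⟨fun i j => Complex.ofReal_im _, ?_, fun x hx => ?_⟩
  · rw [← transpose_map, transpose_smul, transpose_mul, transpose_transpose]
  · simp only [map_apply, Complex.ofReal_re]
    rw [sum_sum_mul_mul_eq_dotProduct_mulVec]
    exact (posDef_transpose_mul_M4invFactor hz.ne').dotProduct_neg_smul_mulVec_neg
      (by positivity) hx

end
end

section
/- For every complex number w, the substitution z₁ = (3/16)·w⁵, z₂ = (3√5/16)·w⁴, z₃ = (√10/8)·w³, z₄ = w³, z₅ = (3√2/4)·w², z₆ = (3/2)·w satisfies the four holomorphic constraints defining the vanishing of the (j = 3/2) component inside the 14'-representation for the nilpotent orbit 𝔒₁ of sp(6,ℝ): (i) √5·(z₄z₆ - z₅²) - 2z₂ = 0; (ii) 8z₃ - √10·z₄ = 0; (iii) √5·z₁ + 2z₃z₅ - 2z₂z₆ = 0; (iv) -√10·z₃² + 8·z₃z₄ - 8·z₂z₅ + √10·z₁z₆ = 0. -/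
/-! Writing `√10 = √5 · √2`, all four constraints become polynomial identities in `w`, `√5`
and `√2` that hold modulo the relations `(√5)² = 5` and `(√2)² = 2`. -/

theorem Complex.ofReal_sqrt_sq {x : ℝ} (hx : 0 ≤ x) : ((√x : ℝ) : ℂ) ^ 2 = x := by
  rw [← Complex.ofReal_pow, Real.sq_sqrt hx]

theorem Complex.ofReal_sqrt_mul {x : ℝ} (hx : 0 ≤ x) (y : ℝ) :
    ((√(x * y) : ℝ) : ℂ) = (√x : ℂ) * (√y : ℂ) := by
  rw [Real.sqrt_mul hx, Complex.ofReal_mul]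

theorem orbit_one_curve_constraints {K : Type*} [Field K] [CharZero K] {s t : K} (hs : s ^ 2 = 5)
    (ht : t ^ 2 = 2) (w : K) :
    let z1 : K := (3 / 16) * w ^ 5
    let z2 : K := (3 * s / 16) * w ^ 4
    let z3 : K := (s * t / 8) * w ^ 3
    let z4 : K := w ^ 3
    let z5 : K := (3 * t / 4) * w ^ 2
    let z6 : K := (3 / 2) * w
    s * (z4 * z6 - z5 ^ 2) - 2 * z2 = 0 ∧
    8 * z3 - s * t * z4 = 0 ∧
    s * z1 + 2 * z3 * z5 - 2 * z2 * z6 = 0 ∧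
    -(s * t) * z3 ^ 2 + 8 * z3 * z4 - 8 * z2 * z5 + s * t * z1 * z6 = 0 := by
  refine ⟨?_, ?_, ?_, ?_⟩
  · linear_combination (-9 / 16 * s * w ^ 4) * ht
  · ring
  · linear_combination (3 / 16 * s * w ^ 5) * ht
  · linear_combination (-(s * t * w ^ 6) / 64) * (t ^ 2 * hs + 5 * ht)

/-- the holomorphic curve `w ↦ (z₁,…,z₆)` associated with the
nilpotent orbit `𝔒₁` of `sp(6,ℝ)` satisfies the four holomorphic constraints
expressing the vanishing of the `(j = 3/2)` component inside the
`14'`-representation. -/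
theorem stmt_18 (w : ℂ) :
    let z1 : ℂ := (3 / 16) * w ^ 5
    let z2 : ℂ := (3 * (Real.sqrt 5 : ℂ) / 16) * w ^ 4
    let z3 : ℂ := ((Real.sqrt 10 : ℂ) / 8) * w ^ 3
    let z4 : ℂ := w ^ 3
    let z5 : ℂ := (3 * (Real.sqrt 2 : ℂ) / 4) * w ^ 2
    let z6 : ℂ := (3 / 2) * w
    (Real.sqrt 5 : ℂ) * (z4 * z6 - z5 ^ 2) - 2 * z2 = 0 ∧
    8 * z3 - (Real.sqrt 10 : ℂ) * z4 = 0 ∧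
    (Real.sqrt 5 : ℂ) * z1 + 2 * z3 * z5 - 2 * z2 * z6 = 0 ∧
    -(Real.sqrt 10 : ℂ) * z3 ^ 2 + 8 * z3 * z4 - 8 * z2 * z5 +
      (Real.sqrt 10 : ℂ) * z1 * z6 = 0 := by
  have sqrt_ten : ((√10 : ℝ) : ℂ) = (√5 : ℂ) * (√2 : ℂ) := by
    rw [← Complex.ofReal_sqrt_mul (by norm_num)]
    norm_num
  rw [sqrt_ten]
  exact orbit_one_curve_constraints (Complex.ofReal_sqrt_sq (by norm_num))
    (Complex.ofReal_sqrt_sq (by norm_num)) w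
end
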